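/- arXiv:2504.10777 — 2 statements merged into one kernel-verified Lean document; each statement's English description precedes it below -/
import Mathlib

section
/- Let γ > 0 and let V be a k-dimensional linear subspace of ℝⁿ that admits at least one disjoint basis. Then among all bases b = (b_1, …, b_k) of V, the standard basis regularization loss L_sbr(b) attains its minimum value, this minimum value equals 0, and a basis b of V attains the minimum if and only if b is disjoint. -/
open Finset

/-- Euclidean inner product of the entrywise absolute values of two vectors in `ℝⁿ`. -/
def absDot {n : ℕ} (v w : Fin n → ℝ) : ℝ := ∑ ℓ : Fin n, |v ℓ| * |w ℓ|

/-- Euclidean norm of a vector in `ℝⁿ`. -/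
noncomputable def enorm2 {n : ℕ} (v : Fin n → ℝ) : ℝ := Real.sqrt (∑ ℓ : Fin n, (v ℓ) ^ 2)

/-- The standard basis regularization loss
`L_sbr(b) = γ Σ_{1 ≤ i < j ≤ k} (|b_i| · |b_j|) / (‖b_i‖ ‖b_j‖)`. -/
noncomputable def Lsbr {n k : ℕ} (γ : ℝ) (b : Fin k → Fin n → ℝ) : ℝ :=
  γ * ∑ i : Fin k, ∑ j : Fin k,
    if i < j then absDot (b i) (b j) / (enorm2 (b i) * enorm2 (b j)) else 0

/-- A family of vectors is disjoint if the supports of distinct members are disjoint. -/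
def DisjointFamily {n k : ℕ} (b : Fin k → Fin n → ℝ) : Prop :=
  ∀ i j : Fin k, i ≠ j → Disjoint (Function.support (b i)) (Function.support (b j))

/-- `b` is a basis of the subspace `V ⊆ ℝⁿ`: it is linearly independent and spans `V`. -/
def IsBasisOf {n k : ℕ} (V : Submodule ℝ (Fin n → ℝ)) (b : Fin k → Fin n → ℝ) : Prop :=
  LinearIndependent ℝ b ∧ Submodule.span ℝ (Set.range b) = V

lemma absDot_nonneg {n : ℕ} (v w : Fin n → ℝ) : 0 ≤ absDot v w :=
  sum_nonneg fun _ _ => mul_nonneg (abs_nonneg _) (abs_nonneg _)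

lemma absDot_eq_zero_iff {n : ℕ} {v w : Fin n → ℝ} :
    absDot v w = 0 ↔ Disjoint (Function.support v) (Function.support w) := by
  rw [absDot, sum_eq_zero_iff_of_nonneg fun _ _ => mul_nonneg (abs_nonneg _) (abs_nonneg _),
    Set.disjoint_left]
  simp only [mem_univ, true_implies, mul_eq_zero, abs_eq_zero, Function.mem_support, ne_eq,
    not_not]
  exact forall_congr' fun ℓ => or_iff_not_imp_left

lemma enorm2_pos {n : ℕ} {v : Fin n → ℝ} (hv : v ≠ 0) : 0 < enorm2 v := by
  obtain ⟨ℓ, hℓ⟩ := Function.ne_iff.mp hv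
  exact Real.sqrt_pos.mpr <| sum_pos' (fun _ _ => sq_nonneg _)
    ⟨ℓ, mem_univ _, pow_pos (abs_pos.mpr hℓ) 2 |>.trans_eq (sq_abs _)⟩

lemma disjointFamily_iff_forall_lt {n k : ℕ} {b : Fin k → Fin n → ℝ} :
    DisjointFamily b ↔
      ∀ i j : Fin k, i < j → Disjoint (Function.support (b i)) (Function.support (b j)) := by
  refine ⟨fun h i j hij => h i j hij.ne, fun h i j hij => ?_⟩
  rcases hij.lt_or_gt with hij | hji
  · exact h i j hij
  · exact (h j i hji).symm

section Lsbr

variable {n k : ℕ} {γ : ℝ} {b : Fin k → Fin n → ℝ}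

lemma lsbr_summand_nonneg (i j : Fin k) :
    0 ≤ if i < j then absDot (b i) (b j) / (enorm2 (b i) * enorm2 (b j)) else 0 :=
  ite_nonneg (div_nonneg (absDot_nonneg _ _)
    (mul_nonneg (Real.sqrt_nonneg _) (Real.sqrt_nonneg _))) le_rfl

lemma lsbr_nonneg (hγ : 0 ≤ γ) (b : Fin k → Fin n → ℝ) : 0 ≤ Lsbr γ b :=
  mul_nonneg hγ <| sum_nonneg fun i _ => sum_nonneg fun j _ => lsbr_summand_nonneg i j

lemma lsbr_eq_zero_iff (hγ : 0 < γ) (hb : ∀ i, b i ≠ 0) : Lsbr γ b = 0 ↔ DisjointFamily b := by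
  rw [Lsbr, mul_eq_zero, or_iff_right hγ.ne',
    sum_eq_zero_iff_of_nonneg fun i _ => sum_nonneg fun j _ => lsbr_summand_nonneg i j,
    disjointFamily_iff_forall_lt]
  refine forall_congr' fun i => ?_
  rw [sum_eq_zero_iff_of_nonneg fun j _ => lsbr_summand_nonneg i j]
  simp only [mem_univ, true_implies, ite_eq_right_iff, div_eq_zero_iff,
    (mul_pos (enorm2_pos (hb _)) (enorm2_pos (hb _))).ne', or_false, absDot_eq_zero_iff]

end Lsbr

theorem lsbr_isLeast_zero_of_exists_disjoint_basis_general {n k : ℕ} (γ : ℝ) (hγ : 0 < γ)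
    (V : Submodule ℝ (Fin n → ℝ))
    (hexists : ∃ b₀ : Fin k → Fin n → ℝ, IsBasisOf V b₀ ∧ DisjointFamily b₀) :
    IsLeast {L : ℝ | ∃ b : Fin k → Fin n → ℝ, IsBasisOf V b ∧ Lsbr γ b = L} 0 ∧
      ∀ b : Fin k → Fin n → ℝ, IsBasisOf V b → (Lsbr γ b = 0 ↔ DisjointFamily b) := by
  have hzero_iff : ∀ b : Fin k → Fin n → ℝ, IsBasisOf V b →
      (Lsbr γ b = 0 ↔ DisjointFamily b) :=
    fun b hb => lsbr_eq_zero_iff hγ hb.1.ne_zero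
  obtain ⟨b₀, hb₀, hdisj⟩ := hexists
  refine ⟨⟨⟨b₀, hb₀, (hzero_iff b₀ hb₀).mpr hdisj⟩, ?_⟩, hzero_iff⟩
  rintro L ⟨b, -, rfl⟩
  exact lsbr_nonneg hγ.le b

/-- If a `k`-dimensional subspace `V` of `ℝⁿ` admits a disjoint basis, then among all
bases of `V` the standard basis regularization loss attains its minimum, the minimum
value is `0`, and a basis attains the minimum iff it is disjoint. -/
theorem lsbr_isLeast_zero_of_exists_disjoint_basis {n k : ℕ} (γ : ℝ) (hγ : 0 < γ)
    (V : Submodule ℝ (Fin n → ℝ)) (hV : Module.finrank ℝ V = k)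
    (hexists : ∃ b₀ : Fin k → Fin n → ℝ, IsBasisOf V b₀ ∧ DisjointFamily b₀) :
    IsLeast {L : ℝ | ∃ b : Fin k → Fin n → ℝ, IsBasisOf V b ∧ Lsbr γ b = L} 0 ∧
      ∀ b : Fin k → Fin n → ℝ, IsBasisOf V b → (Lsbr γ b = 0 ↔ DisjointFamily b) :=
  lsbr_isLeast_zero_of_exists_disjoint_basis_general γ hγ V hexists
end

section
/- Let G be a subgroup of GL(d, ℝ) all of whose elements g satisfy |det g| = 1. Let M = σ_L ∘ C_L ∘ ⋯ ∘ σ_1 ∘ C_1 be a finite composition of layers, where each layer C_i is the convolution f ↦ K_i ⋆ f with an integrable kernel K_i : ℝ^d → ℝ^{C_i^out × C_i^in} satisfying K_i(g⁻¹ v) = K_i(v) for all g ∈ G and v ∈ ℝ^d, and each σ_i is a pointwise nonlinearity acting as (σ_i f)(x) = s_i(f(x)) for a fixed function s_i : ℝ^{C_i^out} → ℝ^{C_i^out}. Assume all intermediate feature fields are bounded and measurable so that all convolutions are well-defined. Then M is G-equivariant: M(g · f) = g · M(f) for every g ∈ G and every admissible input feature field f, where (g · f)(x) = f(g⁻¹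 x). -/
open MeasureTheory

attribute [local instance] Matrix.normedAddCommGroup

noncomputable instance matrixContinuousENormPort {m n : Type*} [Fintype m] [Fintype n] :
    ContinuousENorm (Matrix m n ℝ) :=
  SeminormedAddGroup.toContinuousENorm

/-- The feature field obtained after applying the first `i` layers of the network
`M = σ_L ∘ C_L ∘ ⋯ ∘ σ_1 ∘ C_1` to the input field `f`, where layer `i` first convolves
with the kernel `K i` and then applies the pointwise nonlinearity `s i`. -/
noncomputable def run {d : ℕ} (ch : ℕ → ℕ)
    (K : (i : ℕ) → (Fin d → ℝ) → Matrix (Fin (ch (i + 1))) (Fin (ch i)) ℝ)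
    (s : (i : ℕ) → (Fin (ch (i + 1)) → ℝ) → Fin (ch (i + 1)) → ℝ)
    (f : (Fin d → ℝ) → Fin (ch 0) → ℝ) :
    (i : ℕ) → (Fin d → ℝ) → Fin (ch i) → ℝ
  | 0 => f
  | (i + 1) => fun x => s i (∫ v, (K i v).mulVec (run ch K s f i (x + v)))

/-!
Substituting `v = h w` in `(K ⋆ (f ∘ h))(x) = ∫ K(v) f(h x + h v) dv` turns it into
`(K ⋆ f)(h x)`: the substitution is free because `|det h| = 1` makes `h` preserve Lebesgue
measure, and `K(h w) = K(w)` by invariance of the kernel. Pointwise nonlinearities commute with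
any change of base point, so each layer, and by induction the whole network, is equivariant.
-/

section Convolution

open Matrix

variable {E : Type*} [NormedAddCommGroup E] [NormedSpace ℝ E] [MeasurableSpace E] [BorelSpace E]
  [FiniteDimensional ℝ E] {m n : Type*} [Fintype m] [Fintype n]

theorem LinearEquiv.measurePreserving_of_abs_det_eq_one (μ : Measure E) [μ.IsAddHaarMeasure]
    (h : E ≃ₗ[ℝ] E) (hdet : |LinearMap.det (h : E →ₗ[ℝ] E)| = 1) :
    MeasurePreserving h μ μ := by
  have hdet_ne : LinearMap.det (h : E →ₗ[ℝ] E) ≠ 0 := by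
    intro h0
    simp [h0] at hdet
  refine ⟨(h : E →ₗ[ℝ] E).continuous_of_finiteDimensional.measurable, ?_⟩
  have hmap := Measure.map_linearMap_addHaar_eq_smul_addHaar μ hdet_ne
  rw [abs_inv, hdet] at hmap
  simpa using hmap

noncomputable def kernelConv (μ : Measure E) (K : E → Matrix m n ℝ) (F : E → n → ℝ) :
    E → m → ℝ :=
  fun x => ∫ v, K v *ᵥ F (x + v) ∂μ

theorem kernelConv_comp_linearEquiv {μ : Measure E} (h : E ≃ₗ[ℝ] E)
    (hμ : MeasurePreserving h μ μ) {K : E → Matrix m n ℝ} (hK : ∀ v, K (h v) = K v)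
    (F : E → n → ℝ) :
    kernelConv μ K (F ∘ h) = kernelConv μ K F ∘ h := by
  funext x
  have hemb : MeasurableEmbedding h := h.toContinuousLinearEquiv.toHomeomorph.measurableEmbedding
  calc ∫ v, K v *ᵥ F (h (x + v)) ∂μ
      = ∫ v, K (h v) *ᵥ F (h x + h v) ∂μ := by simp only [map_add, hK]
    _ = ∫ w, K w *ᵥ F (h x + w) ∂μ := hμ.integral_comp hemb (fun w => K w *ᵥ F (h x + w))

end Convolution

theorem run_succ {d : ℕ} (ch : ℕ → ℕ)
    (K : (i : ℕ) → (Fin d → ℝ) → Matrix (Fin (ch (i + 1))) (Fin (ch i)) ℝ)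
    (s : (i : ℕ) → (Fin (ch (i + 1)) → ℝ) → Fin (ch (i + 1)) → ℝ)
    (f : (Fin d → ℝ) → Fin (ch 0) → ℝ) (i : ℕ) :
    run ch K s f (i + 1) = s i ∘ kernelConv volume (K i) (run ch K s f i) := by
  rw [run]
  rfl

theorem network_equivariant_general {d L : ℕ} (ch : ℕ → ℕ)
    (G : Subgroup ((Fin d → ℝ) ≃ₗ[ℝ] (Fin d → ℝ)))
    (hdet : ∀ g ∈ G, |LinearMap.det (g : (Fin d → ℝ) →ₗ[ℝ] (Fin d → ℝ))| = 1)
    (K : (i : ℕ) → (Fin d → ℝ) → Matrix (Fin (ch (i + 1))) (Fin (ch i)) ℝ)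
    (s : (i : ℕ) → (Fin (ch (i + 1)) → ℝ) → Fin (ch (i + 1)) → ℝ)
    (hKinv : ∀ i, ∀ g ∈ G, ∀ v : Fin d → ℝ, K i ((g⁻¹ : (Fin d → ℝ) ≃ₗ[ℝ] _) v) = K i v)
    (f : (Fin d → ℝ) → Fin (ch 0) → ℝ)
    (g : (Fin d → ℝ) ≃ₗ[ℝ] (Fin d → ℝ)) (hg : g ∈ G) :
    run ch K s (fun x => f ((g⁻¹ : (Fin d → ℝ) ≃ₗ[ℝ] _) x)) L
      = fun x => run ch K s f L ((g⁻¹ : (Fin d → ℝ) ≃ₗ[ℝ] _) x) := by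
  have hμ : MeasurePreserving (g⁻¹ : (Fin d → ℝ) ≃ₗ[ℝ] _) volume volume :=
    LinearEquiv.measurePreserving_of_abs_det_eq_one volume _ (hdet _ (inv_mem hg))
  induction L with
  | zero => rfl
  | succ i ih =>
    change _ = run ch K s f (i + 1) ∘ _
    rw [run_succ, run_succ, ih]
    exact congrArg (s i ∘ ·) (kernelConv_comp_linearEquiv _ hμ (hKinv i g hg) _)

/-- Let `G` be a subgroup of `GL(d, ℝ)` (modeled as linear automorphisms of `ℝ^d`) whose
elements all have `|det g| = 1`.  A network `M = σ_L ∘ C_L ∘ ⋯ ∘ σ_1 ∘ C_1` that composes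
convolutions with integrable `G`-invariant kernels (`K_i(g⁻¹ v) = K_i(v)`) and pointwise
nonlinearities is `G`-equivariant on admissible inputs (inputs all of whose intermediate
feature fields are bounded and measurable): `M(g · f) = g · M(f)`, where
`(g · f)(x) = f(g⁻¹ x)`. -/
theorem network_equivariant {d L : ℕ} (ch : ℕ → ℕ)
    (G : Subgroup ((Fin d → ℝ) ≃ₗ[ℝ] (Fin d → ℝ)))
    (hdet : ∀ g ∈ G, |LinearMap.det (g : (Fin d → ℝ) →ₗ[ℝ] (Fin d → ℝ))| = 1)
    (K : (i : ℕ) → (Fin d → ℝ) → Matrix (Fin (ch (i + 1))) (Fin (ch i)) ℝ)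
    (s : (i : ℕ) → (Fin (ch (i + 1)) → ℝ) → Fin (ch (i + 1)) → ℝ)
    (hKint : ∀ i, Integrable (K i))
    (hKinv : ∀ i, ∀ g ∈ G, ∀ v : Fin d → ℝ, K i ((g⁻¹ : (Fin d → ℝ) ≃ₗ[ℝ] _) v) = K i v)
    (f : (Fin d → ℝ) → Fin (ch 0) → ℝ)
    (hmeas : ∀ i, Measurable (run ch K s f i))
    (hbdd : ∀ i, ∃ M, ∀ x, ‖run ch K s f i x‖ ≤ M)
    (g : (Fin d → ℝ) ≃ₗ[ℝ] (Fin d → ℝ)) (hg : g ∈ G) :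
    run ch K s (fun x => f ((g⁻¹ : (Fin d → ℝ) ≃ₗ[ℝ] _) x)) L
      = fun x => run ch K s f L ((g⁻¹ : (Fin d → ℝ) ≃ₗ[ℝ] _) x) :=
  network_equivariant_general ch G hdet K s hKinv f g hg
end
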